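/- (Theorem 3, non-decreasing part.) Under any r-csmGmm, for every dimension k ∈ {1,...,K}, if all coordinates of the test-statistic vector are negative, the replication local false discovery rate is non-decreasing in the k-th coordinate: if z, z' ∈ ℝ^K satisfy z_{k'} = z'_{k'} < 0 for all k' ≠ k and z_k ≤ z'_k < 0, then lfdr^rep(z) ≤ lfdr^rep(z'). -/
import Mathlib


noncomputable section

open Finset

/-- The standard normal density `φ(x) = (2π)^{-1/2} exp(-x²/2)`. -/
def stdNormal (x : ℝ) : ℝ := (Real.sqrt (2 * Real.pi))⁻¹ * Real.exp (-(x ^ 2) / 2)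

/-- Sign value encoded by a ternary digit: `0 ↦ -1`, `1 ↦ 0`, `2 ↦ 1`. -/
def sgnVal (i : Fin 3) : ℝ := (i : ℝ) - 1

/-- The non-null pattern (binary representation) of an association configuration:
`pat h k = true` iff dimension `k` is non-null. -/
def pat {K : ℕ} (h : Fin K → Fin 3) : Fin K → Bool := fun k => h k != 1

/-- A conditionally symmetric multidimensional Gaussian mixture model (csmGmm).
Parameters are indexed by the non-null pattern `β : Fin K → Bool`, which is
equivalent to the binary representation `b ∈ {0,…,2^K - 1}`; the all-`true`
pattern corresponds to `b = 2^K - 1`. -/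
structure CsmGmm (K : ℕ) where
  /-- number of mean-magnitude vectors for each binary representation -/
  M : (Fin K → Bool) → ℕ
  M_pos : ∀ β, 1 ≤ M β
  /-- mixing proportions, shared by configurations with the same binary representation -/
  pi : (β : Fin K → Bool) → Fin (M β) → ℝ
  pi_pos : ∀ β m, 0 < pi β m
  pi_sum : ∑ h : Fin K → Fin 3, ∑ m : Fin (M (pat h)), pi (pat h) m = 1
  /-- mean magnitudes -/
  mu : (β : Fin K → Bool) → Fin (M β) → Fin K → ℝ
  mu_null : ∀ β m k, β k = false → mu β m k = 0
  mu_pos : ∀ β m k, β k = true → 0 < mu β m k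
  mu_alt : ∀ β (m' : Fin (M β)) (m : Fin (M (fun _ => true))) k,
    β ≠ (fun _ => true) → β k = true → mu β m' k ≤ mu (fun _ => true) m k

namespace CsmGmm

variable {K : ℕ}

/-- The numerator `N(z)`: mixture mass over composite-null configurations
(those with at least one null dimension, i.e. some `h k = 0`, encoded by digit `1`). -/
def N (G : CsmGmm K) (z : Fin K → ℝ) : ℝ :=
  ∑ h ∈ Finset.univ.filter (fun h : Fin K → Fin 3 => ∃ k, h k = 1),
    ∑ m : Fin (G.M (pat h)),
      G.pi (pat h) m * ∏ k, stdNormal (z k - sgnVal (h k) * G.mu (pat h) m k)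

/-- The denominator `D(z)`: the full mixture density. -/
def D (G : CsmGmm K) (z : Fin K → ℝ) : ℝ :=
  ∑ h : Fin K → Fin 3,
    ∑ m : Fin (G.M (pat h)),
      G.pi (pat h) m * ∏ k, stdNormal (z k - sgnVal (h k) * G.mu (pat h) m k)

/-- The local false discovery rate `lfdr(z) = N(z)/D(z)`. -/
def lfdr (G : CsmGmm K) (z : Fin K → ℝ) : ℝ := G.N z / G.D z

end CsmGmm

end

noncomputable section

namespace CsmGmm

variable {K : ℕ}

/-- The replication numerator `N^rep(z)`: mixture mass over the replication null
space `H₀^rep = {-1,0,1}^K \ {(1,…,1), (-1,…,-1)}` (digit `2` encodes `1` and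
digit `0` encodes `-1`). -/
def Nrep (G : CsmGmm K) (z : Fin K → ℝ) : ℝ :=
  ∑ h ∈ Finset.univ.filter
      (fun h : Fin K → Fin 3 => h ≠ (fun _ => 2) ∧ h ≠ (fun _ => 0)),
    ∑ m : Fin (G.M (pat h)),
      G.pi (pat h) m * ∏ k, stdNormal (z k - sgnVal (h k) * G.mu (pat h) m k)

/-- The replication local false discovery rate `lfdr^rep(z) = N^rep(z)/D(z)`. -/
def lfdrRep (G : CsmGmm K) (z : Fin K → ℝ) : ℝ := G.Nrep z / G.D z

end CsmGmm

end

noncomputable section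

-- ==================== auxiliary ====================

lemma stdNormal_pos (x : ℝ) : 0 < stdNormal x := by
  unfold stdNormal
  have : 0 < Real.sqrt (2 * Real.pi) := Real.sqrt_pos.2 (by positivity)
  positivity

lemma stdNormal_shift (x c : ℝ) :
    stdNormal (x - c) = stdNormal x * Real.exp (-(c ^ 2) / 2) * Real.exp (x * c) := by
  unfold stdNormal
  rw [mul_assoc, mul_assoc, ← Real.exp_add, ← Real.exp_add]
  congr 1
  ring

lemma prod_stdNormal {K : ℕ} (z c : Fin K → ℝ) :
    ∏ j, stdNormal (z j - c j) =
      (∏ j, stdNormal (z j)) * Real.exp (∑ j, -((c j) ^ 2) / 2) *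
        Real.exp (∑ j, z j * c j) := by
  simp only [stdNormal_shift, Real.exp_sum, Finset.prod_mul_distrib]

lemma prod_stdNormal_add {K : ℕ} (z c : Fin K → ℝ) :
    ∏ j, stdNormal (z j + c j) =
      (∏ j, stdNormal (z j)) * Real.exp (∑ j, -((c j) ^ 2) / 2) *
        Real.exp (-∑ j, z j * c j) := by
  have := prod_stdNormal z (fun j => -c j)
  simp only [mul_neg, neg_neg, sub_neg_eq_add, neg_sq, Finset.sum_neg_distrib] at this
  exact this

lemma cosh_mono_aux {x y : ℝ} (h1 : y ≤ x) (h2 : x + y ≤ 0) : Real.cosh x ≤ Real.cosh y := by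
  rw [Real.cosh_le_cosh]
  rcases le_or_gt x 0 with hx | hx
  · rw [abs_of_nonpos hx, abs_of_nonpos (le_trans h1 hx)]; linarith
  · rw [abs_of_pos hx, abs_of_nonpos (by linarith)]; linarith

lemma cosh_mul_cosh (a b : ℝ) :
    Real.cosh a * Real.cosh b = (Real.cosh (a + b) + Real.cosh (b - a)) / 2 := by
  rw [Real.cosh_add, Real.cosh_sub]; ring

lemma core (t t' α b σ τ : ℝ) (h1 : t ≤ t') (h2 : t' ≤ 0) (hb : |b| ≤ α)
    (hσ : σ ≤ 0) (hτ : |τ| ≤ -σ) :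
    Real.cosh (τ + t * b) * Real.cosh (σ + t' * α) ≤
      Real.cosh (τ + t' * b) * Real.cosh (σ + t * α) := by
  obtain ⟨hb1, hb2⟩ := abs_le.1 hb
  obtain ⟨hτ1, hτ2⟩ := abs_le.1 hτ
  rw [cosh_mul_cosh, cosh_mul_cosh]
  have e1 : Real.cosh (τ + t * b + (σ + t' * α)) ≤ Real.cosh (τ + t' * b + (σ + t * α)) := by
    apply cosh_mono_aux <;> nlinarith
  have e2 : Real.cosh (σ + t' * α - (τ + t * b)) ≤ Real.cosh (σ + t * α - (τ + t' * b)) := by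
    apply cosh_mono_aux <;> nlinarith
  linarith

lemma expcore (t t' α b σ τ C : ℝ) (hC : 0 ≤ C) (h1 : t ≤ t') (h2 : t' ≤ 0) (hb : |b| ≤ α)
    (hσ : σ ≤ 0) (hτ : |τ| ≤ -σ) :
    C * ((Real.exp (τ + t * b) + Real.exp (-(τ + t * b))) *
        (Real.exp (σ + t' * α) + Real.exp (-(σ + t' * α)))) ≤
      C * ((Real.exp (τ + t' * b) + Real.exp (-(τ + t' * b))) *
        (Real.exp (σ + t * α) + Real.exp (-(σ + t * α)))) := by
  apply mul_le_mul_of_nonneg_left _ hC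
  have h := core t t' α b σ τ h1 h2 hb hσ hτ
  simp only [Real.cosh_eq] at h
  nlinarith [h]

def negt (i : Fin 3) : Fin 3 := ![2, 1, 0] i

lemma negt_invol (i : Fin 3) : negt (negt i) = i := by fin_cases i <;> rfl

lemma sgnVal_negt (i : Fin 3) : sgnVal (negt i) = -sgnVal i := by
  fin_cases i <;> norm_num [negt, sgnVal]

lemma pat_negt (i : Fin 3) : (negt i != 1) = (i != 1) := by fin_cases i <;> rfl

lemma sgnVal_abs_le (i : Fin 3) : |sgnVal i| ≤ 1 := by
  fin_cases i <;> norm_num [sgnVal]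

def m0 {K : ℕ} (G : CsmGmm K) : Fin (G.M (fun _ => true)) := ⟨0, G.M_pos _⟩

def isum {K : ℕ} (G : CsmGmm K) (h : Fin K → Fin 3) (u : Fin K → ℝ) : ℝ :=
  ∑ m : Fin (G.M (pat h)),
    G.pi (pat h) m * ∏ j, stdNormal (u j - sgnVal (h j) * G.mu (pat h) m j)

def Apart {K : ℕ} (G : CsmGmm K) (u : Fin K → ℝ) : ℝ :=
  G.pi (fun _ => true) (m0 G) *
    ((∏ j, stdNormal (u j - G.mu (fun _ => true) (m0 G) j)) +
      ∏ j, stdNormal (u j + G.mu (fun _ => true) (m0 G) j))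

lemma pat_negc {K : ℕ} (h : Fin K → Fin 3) : pat (fun j => negt (h j)) = pat h :=
  funext fun j => pat_negt (h j)

lemma isum_neg {K : ℕ} (G : CsmGmm K) (h : Fin K → Fin 3) (u : Fin K → ℝ) :
    isum G (fun j => negt (h j)) u =
      ∑ m : Fin (G.M (pat h)),
        G.pi (pat h) m * ∏ j, stdNormal (u j + sgnVal (h j) * G.mu (pat h) m j) := by
  simp only [isum]
  rw [pat_negc]
  refine Finset.sum_congr rfl fun m _ => ?_
  congr 1
  refine Finset.prod_congr rfl fun j _ => ?_
  rw [sgnVal_negt, neg_mul, sub_neg_eq_add]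

lemma sum_M1 {K : ℕ} (G : CsmGmm K) (hM1 : G.M (fun _ => true) = 1)
    (f : Fin (G.M (fun _ => true)) → ℝ) : (∑ m, f m) = f (m0 G) := by
  apply Finset.sum_eq_single_of_mem (m0 G) (Finset.mem_univ _)
  intro b _ hb
  have hb1 : (b : ℕ) < 1 := hM1 ▸ b.isLt
  exact absurd (Fin.ext (by simpa [m0] using hb1)) hb

lemma sgnVal_two : sgnVal 2 = 1 := by norm_num [sgnVal]
lemma sgnVal_zero : sgnVal 0 = -1 := by norm_num [sgnVal]

lemma D_split {K : ℕ} (G : CsmGmm K) (hK : 0 < K) (hM1 : G.M (fun _ => true) = 1)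
    (u : Fin K → ℝ) : G.D u = G.Nrep u + Apart G u := by
  classical
  have hsplit := Finset.sum_filter_add_sum_filter_not Finset.univ
    (fun h : Fin K → Fin 3 => h ≠ (fun _ => 2) ∧ h ≠ (fun _ => 0))
    (fun h => ∑ m : Fin (G.M (pat h)),
      G.pi (pat h) m * ∏ j, stdNormal (u j - sgnVal (h j) * G.mu (pat h) m j))
  rw [CsmGmm.D, ← hsplit]
  congr 1
  have hset : Finset.univ.filter
      (fun h : Fin K → Fin 3 => ¬(h ≠ (fun _ => 2) ∧ h ≠ (fun _ => 0))) =
      {fun _ => 2, fun _ => 0} := by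
    ext h
    simp only [Finset.mem_filter, Finset.mem_univ, true_and, not_and_or, not_not,
      Finset.mem_insert, Finset.mem_singleton]
  have hne2 : (fun _ : Fin K => (2 : Fin 3)) ≠ (fun _ => 0) := by
    intro hc
    exact absurd (congrFun hc ⟨0, hK⟩) (by decide)
  rw [hset, Finset.sum_pair hne2]
  have hpat2 : pat (fun _ : Fin K => (2 : Fin 3)) = fun _ => true := rfl
  have hpat0 : pat (fun _ : Fin K => (0 : Fin 3)) = fun _ => true := rfl
  rw [hpat2, hpat0, sum_M1 G hM1, sum_M1 G hM1]
  simp only [Apart, sgnVal_two, sgnVal_zero, one_mul, neg_one_mul, sub_neg_eq_add]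
  ring

lemma Nrep_pos {K : ℕ} (hK : 2 ≤ K) (G : CsmGmm K) (u : Fin K → ℝ) : 0 < G.Nrep u := by
  rw [CsmGmm.Nrep]
  apply Finset.sum_pos
  · intro h _
    apply Finset.sum_pos
    · intro m _
      exact mul_pos (G.pi_pos _ _) (Finset.prod_pos fun j _ => stdNormal_pos _)
    · exact ⟨⟨0, G.M_pos _⟩, Finset.mem_univ _⟩
  · refine ⟨fun _ => 1, ?_⟩
    rw [Finset.mem_filter]
    refine ⟨Finset.mem_univ _, ?_, ?_⟩
    · intro hc; exact absurd (congrFun hc ⟨0, by omega⟩) (by decide)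
    · intro hc; exact absurd (congrFun hc ⟨0, by omega⟩) (by decide)

lemma Apart_pos {K : ℕ} (G : CsmGmm K) (u : Fin K → ℝ) : 0 < Apart G u :=
  mul_pos (G.pi_pos _ _)
    (add_pos (Finset.prod_pos fun j _ => stdNormal_pos _)
      (Finset.prod_pos fun j _ => stdNormal_pos _))

lemma main_ineq {K : ℕ} (hK : 2 ≤ K) (G : CsmGmm K) (hM1 : G.M (fun _ => true) = 1)
    (k : Fin K) (z z' : Fin K → ℝ)
    (hfix : ∀ k', k' ≠ k → z k' = z' k' ∧ z k' < 0)
    (hle : z k ≤ z' k) (h0 : z' k < 0) :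
    G.Nrep z * Apart G z' ≤ G.Nrep z' * Apart G z := by
  classical
  have hzneg : ∀ j, z j < 0 := by
    intro j; by_cases hj : j = k
    · subst hj; exact lt_of_le_of_lt hle h0
    · exact (hfix j hj).2
  -- magnitude bounds
  have hmu_nonneg : ∀ (β : Fin K → Bool) (m : Fin (G.M β)) (j : Fin K), 0 ≤ G.mu β m j := by
    intro β m j
    by_cases hβj : β j = true
    · exact (G.mu_pos β m j hβj).le
    · rw [G.mu_null β m j (by simpa using hβj)]
  have hmu_le : ∀ (β : Fin K → Bool) (m : Fin (G.M β)) (j : Fin K),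
      G.mu β m j ≤ G.mu (fun _ => true) (m0 G) j := by
    intro β m j
    by_cases hβj : β j = true
    · by_cases hb : β = fun _ => true
      · subst hb
        have hm : m = m0 G := by
          have hmlt : (m : ℕ) < 1 := lt_of_lt_of_eq m.isLt hM1
          have h0' : ((m0 G : Fin (G.M (fun _ => true))) : ℕ) = 0 := rfl
          exact Fin.ext (by omega)
        rw [hm]
      · exact G.mu_alt β m (m0 G) j hb hβj
    · rw [G.mu_null β m j (by simpa using hβj)]
      exact (G.mu_pos _ (m0 G) j rfl).le
  have hvw : ∀ (h : Fin K → Fin 3) (m : Fin (G.M (pat h))) (j : Fin K),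
      |sgnVal (h j) * G.mu (pat h) m j| ≤ G.mu (fun _ => true) (m0 G) j := by
    intro h m j
    rw [abs_mul, abs_of_nonneg (hmu_nonneg _ m j)]
    calc |sgnVal (h j)| * G.mu (pat h) m j ≤ 1 * G.mu (pat h) m j :=
          mul_le_mul_of_nonneg_right (sgnVal_abs_le _) (hmu_nonneg _ m j)
      _ = G.mu (pat h) m j := one_mul _
      _ ≤ G.mu (fun _ => true) (m0 G) j := hmu_le _ m j
  set F : Finset (Fin K → Fin 3) :=
    Finset.univ.filter (fun h : Fin K → Fin 3 => h ≠ (fun _ => 2) ∧ h ≠ (fun _ => 0)) with hF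
  have hmemF : ∀ h ∈ F, (fun j => negt (h j)) ∈ F := by
    intro h hh
    rw [hF, Finset.mem_filter] at hh ⊢
    refine ⟨Finset.mem_univ _, ?_, ?_⟩
    · intro hc
      apply hh.2.2
      funext j
      have hj := congrFun hc j
      calc h j = negt (negt (h j)) := (negt_invol _).symm
        _ = negt 2 := by rw [hj]
        _ = 0 := rfl
    · intro hc
      apply hh.2.1
      funext j
      have hj := congrFun hc j
      calc h j = negt (negt (h j)) := (negt_invol _).symm
        _ = negt 0 := by rw [hj]
        _ = 2 := rfl
  have hre : ∀ (f : (Fin K → Fin 3) → ℝ),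
      ∑ h ∈ F, f h = ∑ h ∈ F, f (fun j => negt (h j)) := by
    intro f
    refine Finset.sum_bij' (fun h _ => fun j => negt (h j)) (fun h _ => fun j => negt (h j))
      (fun a ha => hmemF a ha) (fun a ha => hmemF a ha) ?_ ?_ ?_
    · intro a _; funext j; exact negt_invol _
    · intro a _; funext j; exact negt_invol _
    · intro a _
      exact congrArg f (funext fun j => (negt_invol (a j)).symm)
  -- key pairwise inequality
  have key : ∀ h ∈ F,
      isum G h z * Apart G z' + isum G (fun j => negt (h j)) z * Apart G z' ≤
        isum G h z' * Apart G z + isum G (fun j => negt (h j)) z' * Apart G z := by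
    intro h _
    rw [isum_neg, isum_neg]
    simp only [isum]
    rw [Finset.sum_mul, Finset.sum_mul, Finset.sum_mul, Finset.sum_mul,
      ← Finset.sum_add_distrib, ← Finset.sum_add_distrib]
    refine Finset.sum_le_sum fun m _ => ?_
    have hp1 : (∏ j, stdNormal (z j - sgnVal (h j) * G.mu (pat h) m j)) =
        (∏ j, stdNormal (z j)) *
          Real.exp (∑ j, -((sgnVal (h j) * G.mu (pat h) m j) ^ 2) / 2) *
          Real.exp (∑ j, z j * (sgnVal (h j) * G.mu (pat h) m j)) :=
      prod_stdNormal z _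
    have hp2 : (∏ j, stdNormal (z j + sgnVal (h j) * G.mu (pat h) m j)) =
        (∏ j, stdNormal (z j)) *
          Real.exp (∑ j, -((sgnVal (h j) * G.mu (pat h) m j) ^ 2) / 2) *
          Real.exp (-∑ j, z j * (sgnVal (h j) * G.mu (pat h) m j)) :=
      prod_stdNormal_add z _
    have hp3 : (∏ j, stdNormal (z' j - sgnVal (h j) * G.mu (pat h) m j)) =
        (∏ j, stdNormal (z' j)) *
          Real.exp (∑ j, -((sgnVal (h j) * G.mu (pat h) m j) ^ 2) / 2) *
          Real.exp (∑ j, z' j * (sgnVal (h j) * G.mu (pat h) m j)) :=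
      prod_stdNormal z' _
    have hp4 : (∏ j, stdNormal (z' j + sgnVal (h j) * G.mu (pat h) m j)) =
        (∏ j, stdNormal (z' j)) *
          Real.exp (∑ j, -((sgnVal (h j) * G.mu (pat h) m j) ^ 2) / 2) *
          Real.exp (-∑ j, z' j * (sgnVal (h j) * G.mu (pat h) m j)) :=
      prod_stdNormal_add z' _
    have hq1 : (∏ j, stdNormal (z j - G.mu (fun _ => true) (m0 G) j)) =
        (∏ j, stdNormal (z j)) *
          Real.exp (∑ j, -((G.mu (fun _ => true) (m0 G) j) ^ 2) / 2) *
          Real.exp (∑ j, z j * G.mu (fun _ => true) (m0 G) j) :=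
      prod_stdNormal z _
    have hq2 : (∏ j, stdNormal (z j + G.mu (fun _ => true) (m0 G) j)) =
        (∏ j, stdNormal (z j)) *
          Real.exp (∑ j, -((G.mu (fun _ => true) (m0 G) j) ^ 2) / 2) *
          Real.exp (-∑ j, z j * G.mu (fun _ => true) (m0 G) j) :=
      prod_stdNormal_add z _
    have hq3 : (∏ j, stdNormal (z' j - G.mu (fun _ => true) (m0 G) j)) =
        (∏ j, stdNormal (z' j)) *
          Real.exp (∑ j, -((G.mu (fun _ => true) (m0 G) j) ^ 2) / 2) *
          Real.exp (∑ j, z' j * G.mu (fun _ => true) (m0 G) j) :=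
      prod_stdNormal z' _
    have hq4 : (∏ j, stdNormal (z' j + G.mu (fun _ => true) (m0 G) j)) =
        (∏ j, stdNormal (z' j)) *
          Real.exp (∑ j, -((G.mu (fun _ => true) (m0 G) j) ^ 2) / 2) *
          Real.exp (-∑ j, z' j * G.mu (fun _ => true) (m0 G) j) :=
      prod_stdNormal_add z' _
    have hsv : (∑ j, z j * (sgnVal (h j) * G.mu (pat h) m j)) =
        (∑ j ∈ Finset.univ.erase k, z j * (sgnVal (h j) * G.mu (pat h) m j)) +
          z k * (sgnVal (h k) * G.mu (pat h) m k) :=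
      (Finset.sum_erase_add _ _ (Finset.mem_univ k)).symm
    have hsw : (∑ j, z j * G.mu (fun _ => true) (m0 G) j) =
        (∑ j ∈ Finset.univ.erase k, z j * G.mu (fun _ => true) (m0 G) j) +
          z k * G.mu (fun _ => true) (m0 G) k :=
      (Finset.sum_erase_add _ _ (Finset.mem_univ k)).symm
    have hsv' : (∑ j, z' j * (sgnVal (h j) * G.mu (pat h) m j)) =
        (∑ j ∈ Finset.univ.erase k, z j * (sgnVal (h j) * G.mu (pat h) m j)) +
          z' k * (sgnVal (h k) * G.mu (pat h) m k) := by
      rw [← Finset.sum_erase_add Finset.univ _ (Finset.mem_univ k)]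
      congr 1
      refine Finset.sum_congr rfl fun j hj => ?_
      rw [(hfix j (Finset.ne_of_mem_erase hj)).1]
    have hsw' : (∑ j, z' j * G.mu (fun _ => true) (m0 G) j) =
        (∑ j ∈ Finset.univ.erase k, z j * G.mu (fun _ => true) (m0 G) j) +
          z' k * G.mu (fun _ => true) (m0 G) k := by
      rw [← Finset.sum_erase_add Finset.univ _ (Finset.mem_univ k)]
      congr 1
      refine Finset.sum_congr rfl fun j hj => ?_
      rw [(hfix j (Finset.ne_of_mem_erase hj)).1]
    have hC : (0:ℝ) ≤ G.pi (pat h) m * G.pi (fun _ => true) (m0 G) *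
        (∏ j, stdNormal (z j)) * (∏ j, stdNormal (z' j)) *
        Real.exp (∑ j, -((sgnVal (h j) * G.mu (pat h) m j) ^ 2) / 2) *
        Real.exp (∑ j, -((G.mu (fun _ => true) (m0 G) j) ^ 2) / 2) :=
      (mul_pos (mul_pos (mul_pos (mul_pos (mul_pos (G.pi_pos _ _) (G.pi_pos _ _))
        (Finset.prod_pos fun j _ => stdNormal_pos _))
        (Finset.prod_pos fun j _ => stdNormal_pos _)) (Real.exp_pos _)) (Real.exp_pos _)).le
    have hb : |sgnVal (h k) * G.mu (pat h) m k| ≤ G.mu (fun _ => true) (m0 G) k := hvw h m k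
    have hσ : (∑ j ∈ Finset.univ.erase k, z j * G.mu (fun _ => true) (m0 G) j) ≤ 0 :=
      Finset.sum_nonpos fun j _ =>
        mul_nonpos_iff.2 (Or.inr ⟨(hzneg j).le, (G.mu_pos _ (m0 G) j rfl).le⟩)
    have hτ : |∑ j ∈ Finset.univ.erase k, z j * (sgnVal (h j) * G.mu (pat h) m j)| ≤
        -(∑ j ∈ Finset.univ.erase k, z j * G.mu (fun _ => true) (m0 G) j) := by
      rw [← Finset.sum_neg_distrib]
      refine le_trans (Finset.abs_sum_le_sum_abs _ _) (Finset.sum_le_sum fun j _ => ?_)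
      rw [abs_mul, abs_of_neg (hzneg j)]
      have h1 := hvw h m j
      have h2 := abs_nonneg (sgnVal (h j) * G.mu (pat h) m j)
      nlinarith [hzneg j]
    have main := expcore (z k) (z' k) (G.mu (fun _ => true) (m0 G) k)
      (sgnVal (h k) * G.mu (pat h) m k)
      (∑ j ∈ Finset.univ.erase k, z j * G.mu (fun _ => true) (m0 G) j)
      (∑ j ∈ Finset.univ.erase k, z j * (sgnVal (h j) * G.mu (pat h) m j))
      (G.pi (pat h) m * G.pi (fun _ => true) (m0 G) *
        (∏ j, stdNormal (z j)) * (∏ j, stdNormal (z' j)) *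
        Real.exp (∑ j, -((sgnVal (h j) * G.mu (pat h) m j) ^ 2) / 2) *
        Real.exp (∑ j, -((G.mu (fun _ => true) (m0 G) j) ^ 2) / 2))
      hC hle h0.le hb hσ hτ
    simp only [Apart]
    rw [hp1, hp2, hp3, hp4, hq1, hq2, hq3, hq4, hsv, hsw, hsv', hsw']
    linarith [main]
  -- assemble
  have goal' := Finset.sum_le_sum key
  rw [Finset.sum_add_distrib, Finset.sum_add_distrib] at goal'
  have e1 : ∑ h ∈ F, isum G h z * Apart G z' =
      ∑ h ∈ F, isum G (fun j => negt (h j)) z * Apart G z' := hre _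
  have e2 : ∑ h ∈ F, isum G h z' * Apart G z =
      ∑ h ∈ F, isum G (fun j => negt (h j)) z' * Apart G z := hre _
  rw [← e1, ← e2] at goal'
  have hN : G.Nrep z = ∑ h ∈ F, isum G h z := rfl
  have hN' : G.Nrep z' = ∑ h ∈ F, isum G h z' := rfl
  rw [hN, hN', Finset.sum_mul, Finset.sum_mul]
  linarith [goal']

end

/-- **Theorem 3 (non-decreasing part).** Under any r-csmGmm (a csmGmm with
`M_{2^K-1} = 1`), if all coordinates are negative, the replication lfdr is
non-decreasing in the `k`-th coordinate. -/
theorem rcsmGmm_lfdrRep_nondecreasing_on_neg {K : ℕ} (hK : 2 ≤ K) (G : CsmGmm K)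
    (hM1 : G.M (fun _ => true) = 1)
    (k : Fin K) (z z' : Fin K → ℝ)
    (hfix : ∀ k', k' ≠ k → z k' = z' k' ∧ z k' < 0)
    (hle : z k ≤ z' k) (h0 : z' k < 0) :
    G.lfdrRep z ≤ G.lfdrRep z' := by
  have hK0 : 0 < K := by omega
  have key := main_ineq hK G hM1 k z z' hfix hle h0
  have hNz : 0 < G.Nrep z := Nrep_pos hK G z
  have hNz' : 0 < G.Nrep z' := Nrep_pos hK G z'
  have hAz : 0 < Apart G z := Apart_pos G z
  have hAz' : 0 < Apart G z' := Apart_pos G z'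
  show G.Nrep z / G.D z ≤ G.Nrep z' / G.D z'
  rw [D_split G hK0 hM1 z, D_split G hK0 hM1 z',
    div_le_div_iff₀ (by linarith) (by linarith)]
  nlinarith [key]
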